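/- arXiv:1509.05587 — 2 statements merged into one kernel-verified Lean document; each statement's English description precedes it below -/
import Mathlib

section
/- Let F be a saturated foliation of degree 3 on ℙ². If p is a singular point with algebraic multiplicity ν(F,p) ≥ 3, then every other singular point s ≠ p satisfies ν(F,s) ≤ 2 — in fact ν(F,s) ≤ 1. -/
/-!
Put `v = s - p`. On the affine line `t ↦ p + t v` of the chart `z = 1`, the forms `a` and `b`
restrict to polynomials of degree at most `4` with a root of multiplicity `≥ 3` at `t = 0`
(since `ν(F,p) ≥ 3`) and, if `ν(F,s) ≥ 2`, a root of multiplicity `≥ 2` at `t = 1`; so both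
restrictions vanish. By homogeneity `a` and `b` then vanish on the plane of `ℂ³` lying over that
line, and by the Euler relation so does `c`. Hence the linear equation of the line divides `a`,
`b` and `c`, contradicting saturation.
-/

open MvPolynomial

/-- Vanishing order at the origin of a formal power series in two variables. -/
noncomputable def mvOrder (A : MvPowerSeries (Fin 2) ℂ) : ℕ :=
  sInf {d : ℕ | ∃ m : Fin 2 →₀ ℕ, m 0 + m 1 = d ∧ MvPowerSeries.coeff m A ≠ 0}

/-- The algebraic multiplicity `ν` at the point `s` of the foliation whose local (saturated)
defining vector field has components given (up to sign/order) by the polynomials `A`, `B`: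
the minimum of the vanishing orders of `A` and `B` at `s`. -/
noncomputable def algMult (A B : MvPolynomial (Fin 2) ℂ) (s : ℂ × ℂ) : ℕ :=
  min
    (mvOrder (MvPolynomial.toMvPowerSeries
      (aeval ![(X 0 : MvPolynomial (Fin 2) ℂ) + C s.1, X 1 + C s.2] A)))
    (mvOrder (MvPolynomial.toMvPowerSeries
      (aeval ![(X 0 : MvPolynomial (Fin 2) ℂ) + C s.1, X 1 + C s.2] B)))

namespace Polynomial

variable {K : Type*} [Field K]

theorem eq_zero_of_pow_dvd_of_pow_dvd {u : K[X]} {a b : K} (hab : a ≠ b) {m n : ℕ}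
    (ha : (X - C a) ^ m ∣ u) (hb : (X - C b) ^ n ∣ u) (hdeg : u.natDegree < m + n) :
    u = 0 := by
  by_contra hu
  have hcop : IsCoprime ((X - C a) ^ m) ((X - C b) ^ n) :=
    (isCoprime_X_sub_C_of_isUnit_sub (sub_ne_zero.mpr hab).isUnit).pow
  have hle := natDegree_le_of_dvd (hcop.mul_dvd ha hb) hu
  rw [((monic_X_sub_C a).pow m).natDegree_mul ((monic_X_sub_C b).pow n), natDegree_pow,
    natDegree_pow, natDegree_X_sub_C, natDegree_X_sub_C] at hle
  omega

end Polynomial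

namespace MvPolynomial

variable {R σ A : Type*} [CommSemiring R]

theorem natDegree_aeval_le_totalDegree (Q : MvPolynomial σ R) {f : σ → Polynomial R}
    (hf : ∀ i, (f i).natDegree ≤ 1) : (aeval f Q).natDegree ≤ Q.totalDegree := by
  rw [aeval_def, eval₂_eq]
  refine Polynomial.natDegree_sum_le_of_forall_le _ _ fun d hd => ?_
  calc _ ≤ ∑ i ∈ d.support, (f i ^ d i).natDegree := by
        rw [← Polynomial.C_eq_algebraMap]
        exact (Polynomial.natDegree_C_mul_le _ _).trans (Polynomial.natDegree_prod_le _ _)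
    _ ≤ ∑ i ∈ d.support, d i := Finset.sum_le_sum fun i _ =>
        (Polynomial.natDegree_pow_le_of_le _ (hf i)).trans_eq (mul_one _)
    _ ≤ Q.totalDegree := le_totalDegree hd

theorem pow_dvd_aeval_mul_of_le_degree [CommSemiring A] [Algebra R A] {Q : MvPolynomial σ R}
    {k : ℕ} (hQ : ∀ d ∈ Q.support, k ≤ d.degree) (v : σ → A) (g : A) :
    g ^ k ∣ aeval (fun i => v i * g) Q := by
  rw [aeval_def, eval₂_eq]
  refine Finset.dvd_sum fun d hd => Dvd.dvd.mul_left ?_ _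
  rw [Finset.prod_congr rfl fun i _ => mul_pow (v i) g (d i), Finset.prod_mul_distrib,
    Finset.prod_pow_eq_pow_sum]
  exact (pow_dvd_pow g (hQ d hd)).mul_left _

theorem dvd_aeval_sub_aeval [CommRing A] [Algebra R A] {d : A} {f g : σ → A}
    (hfg : ∀ i, d ∣ f i - g i) (Q : MvPolynomial σ R) : d ∣ aeval f Q - aeval g Q := by
  rw [← Ideal.mem_span_singleton, ← Ideal.Quotient.eq, ← Ideal.Quotient.mkₐ_eq_mk R,
    comp_aeval_apply, comp_aeval_apply]
  congr 2 with i
  rw [Ideal.Quotient.mkₐ_eq_mk, Ideal.Quotient.eq, Ideal.mem_span_singleton]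
  exact hfg i

end MvPolynomial

section Plane

variable {K σ : Type*}

noncomputable def restrictToSpan [CommSemiring K] (V P : σ → K) :
    MvPolynomial σ K →ₐ[K] MvPolynomial (Fin 2) K :=
  aeval fun i => C (V i) * X 0 + C (P i) * X 1

theorem restrictToSpan_X [CommSemiring K] (V P : σ → K) (i : σ) :
    restrictToSpan V P (X i) = C (V i) * X 0 + C (P i) * X 1 :=
  aeval_X _ i

theorem restrictToSpan_eq_zero_of_aeval_eq_zero [CommSemiring K] {V P : σ → K}
    {h : MvPolynomial σ K} {n : ℕ} (hh : h.IsHomogeneous n)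
    (hline : aeval (fun i => Polynomial.C (V i) * Polynomial.X + Polynomial.C (P i)) h = 0) :
    restrictToSpan V P h = 0 := by
  have hφ : (restrictToSpan V P h).IsHomogeneous (1 * n) := hh.aeval _ fun i =>
    (isHomogeneous_C_mul_X (V i) 0).add (isHomogeneous_C_mul_X (P i) 1)
  rw [one_mul] at hφ
  have hdehom : aeval ![Polynomial.X, 1] (restrictToSpan V P h) =
      aeval (fun i => Polynomial.C (V i) * Polynomial.X + Polynomial.C (P i)) h := by
    rw [restrictToSpan, comp_aeval_apply]
    simp
  rw [← Polynomial.homogenize_eq_of_isHomogeneous hφ hdehom, hline,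
    Polynomial.homogenize_zero]

/-- The equation of the projective line through `[p.1 : p.2 : 1]` and `[v.1 : v.2 : 0]`. -/
noncomputable def lineForm [CommRing K] (p v : K × K) : MvPolynomial (Fin 3) K :=
  C v.1 * (X 1 - C p.2 * X 2) - C v.2 * (X 0 - C p.1 * X 2)

theorem not_isUnit_lineForm [CommRing K] [Nontrivial K] (p v : K × K) :
    ¬IsUnit (lineForm p v) := fun hu => by
  simpa [lineForm] using hu.map (eval ![p.1, p.2, 1])

theorem lineForm_dvd_of_restrictToSpan_eq_zero [CommRing K] {p v w : K × K}
    (hw : v.1 * w.2 - v.2 * w.1 = 1) {h : MvPolynomial (Fin 3) K}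
    (hh : restrictToSpan ![v.1, v.2, 0] ![p.1, p.2, 1] h = 0) : lineForm p v ∣ h := by
  -- `X ↦ T • V + X 2 • P` is a retraction onto the plane `lineForm p v = 0`
  set T : MvPolynomial (Fin 3) K := C w.2 * (X 0 - C p.1 * X 2) - C w.1 * (X 1 - C p.2 * X 2)
    with hT
  have hwC : C v.1 * C w.2 - C v.2 * C w.1 = (1 : MvPolynomial (Fin 3) K) := by
    simpa using congrArg (C : K → MvPolynomial (Fin 3) K) hw
  have hretract : aeval ![C v.1 * T + C p.1 * X 2, C v.2 * T + C p.2 * X 2, X 2] h = 0 := by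
    rw [← map_zero (aeval (R := K) ![T, X 2]), ← hh, restrictToSpan, comp_aeval_apply]
    refine congrArg (aeval · h) (funext fun i => ?_)
    fin_cases i <;> simp
  have h0 : lineForm p v ∣ X 0 - (C v.1 * T + C p.1 * X 2) := ⟨C w.1, by
    rw [lineForm]; linear_combination (-C v.1) * hT - (X 0 - C p.1 * X 2) * hwC⟩
  have h1 : lineForm p v ∣ X 1 - (C v.2 * T + C p.2 * X 2) := ⟨C w.2, by
    rw [lineForm]; linear_combination (-C v.2) * hT - (X 1 - C p.2 * X 2) * hwC⟩
  have hdvd := dvd_aeval_sub_aeval (f := X)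
    (g := ![C v.1 * T + C p.1 * X 2, C v.2 * T + C p.2 * X 2, X 2]) (fun i => by
    fin_cases i
    exacts [h0, h1, by simp]) h
  rwa [aeval_X_left_apply, hretract, sub_zero] at hdvd

theorem exists_mul_sub_mul_eq_one [Field K] {v : K × K} (hv : v ≠ 0) :
    ∃ w : K × K, v.1 * w.2 - v.2 * w.1 = 1 := by
  by_cases h1 : v.1 = 0
  · have h2 : v.2 ≠ 0 := fun h2 => hv (Prod.ext h1 h2)
    exact ⟨(-v.2⁻¹, 0), by simp [h1, h2]⟩
  · exact ⟨(0, v.1⁻¹), by simp [h1]⟩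

end Plane

theorem le_degree_of_le_mvOrder {Q : MvPolynomial (Fin 2) ℂ} {k : ℕ}
    (hk : k ≤ mvOrder Q.toMvPowerSeries) {d : Fin 2 →₀ ℕ} (hd : d ∈ Q.support) :
    k ≤ d.degree :=
  hk.trans <| Nat.sInf_le ⟨d, by rw [Finsupp.degree_eq_sum, Fin.sum_univ_two],
    by simpa [coeff_coe] using hd⟩

theorem pow_dvd_aeval_of_le_mvOrder {Q : MvPolynomial (Fin 2) ℂ} {q : ℂ × ℂ} {k : ℕ}
    (hk : k ≤ mvOrder (toMvPowerSeries (aeval ![X 0 + C q.1, X 1 + C q.2] Q)))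
    (v : ℂ × ℂ) (g : Polynomial ℂ) :
    g ^ k ∣ aeval ![Polynomial.C q.1 + Polynomial.C v.1 * g,
      Polynomial.C q.2 + Polynomial.C v.2 * g] Q := by
  have hshift : aeval ![Polynomial.C q.1 + Polynomial.C v.1 * g,
      Polynomial.C q.2 + Polynomial.C v.2 * g] Q =
      aeval (fun i => ![Polynomial.C v.1, Polynomial.C v.2] i * g)
        (aeval ![X 0 + C q.1, X 1 + C q.2] Q) := by
    rw [comp_aeval_apply]
    congr 1 with i
    fin_cases i <;> simp [add_comm]
  rw [hshift]
  exact pow_dvd_aeval_mul_of_le_degree (fun d hd => le_degree_of_le_mvOrder hk hd) _ g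

theorem aeval_line_eq_zero_of_le_mvOrder {h : MvPolynomial (Fin 3) ℂ} {m k : ℕ}
    (hdeg : h.totalDegree < m + k) {p s : ℂ × ℂ}
    (hp : m ≤ mvOrder (toMvPowerSeries (aeval ![X 0 + C p.1, X 1 + C p.2]
      (aeval ![X 0, X 1, (1 : MvPolynomial (Fin 2) ℂ)] h))))
    (hs : k ≤ mvOrder (toMvPowerSeries (aeval ![X 0 + C s.1, X 1 + C s.2]
      (aeval ![X 0, X 1, (1 : MvPolynomial (Fin 2) ℂ)] h)))) :
    aeval (fun i => Polynomial.C (![(s - p).1, (s - p).2, 0] i) * Polynomial.X +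
      Polynomial.C (![p.1, p.2, 1] i)) h = 0 := by
  have hline : aeval (fun i => Polynomial.C (![(s - p).1, (s - p).2, 0] i) * Polynomial.X +
      Polynomial.C (![p.1, p.2, 1] i)) h =
      aeval ![Polynomial.C p.1 + Polynomial.C (s - p).1 * Polynomial.X,
        Polynomial.C p.2 + Polynomial.C (s - p).2 * Polynomial.X]
        (aeval ![X 0, X 1, (1 : MvPolynomial (Fin 2) ℂ)] h) := by
    rw [comp_aeval_apply]
    refine congrArg (aeval · h) (funext fun i => ?_)
    fin_cases i <;> simp [add_comm]
  refine Polynomial.eq_zero_of_pow_dvd_of_pow_dvd zero_ne_one (m := m) (n := k) ?_ ?_ ?_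
  · rw [hline, map_zero, sub_zero]
    exact pow_dvd_aeval_of_le_mvOrder hp (s - p) Polynomial.X
  · convert pow_dvd_aeval_of_le_mvOrder hs (s - p) (Polynomial.X - Polynomial.C 1) using 1
    rw [hline]
    refine congrArg (aeval · _) (funext fun i => ?_)
    fin_cases i <;> simp <;> ring
  · exact (natDegree_aeval_le_totalDegree h fun _ => Polynomial.natDegree_linear_le).trans_lt
      hdeg

theorem restrictToSpan_eq_zero_of_le_mvOrder {h : MvPolynomial (Fin 3) ℂ} {n m k : ℕ}
    (hh : h.IsHomogeneous n) (hnmk : n < m + k) {p s : ℂ × ℂ}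
    (hp : m ≤ mvOrder (toMvPowerSeries (aeval ![X 0 + C p.1, X 1 + C p.2]
      (aeval ![X 0, X 1, (1 : MvPolynomial (Fin 2) ℂ)] h))))
    (hs : k ≤ mvOrder (toMvPowerSeries (aeval ![X 0 + C s.1, X 1 + C s.2]
      (aeval ![X 0, X 1, (1 : MvPolynomial (Fin 2) ℂ)] h)))) :
    restrictToSpan ![(s - p).1, (s - p).2, 0] ![p.1, p.2, 1] h = 0 :=
  restrictToSpan_eq_zero_of_aeval_eq_zero hh <|
    aeval_line_eq_zero_of_le_mvOrder (hh.totalDegree_le.trans_lt hnmk) hp hs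

theorem stmt7_general (a b c : MvPolynomial (Fin 3) ℂ)
    (ha : a.IsHomogeneous 4) (hb : b.IsHomogeneous 4)
    (heuler : X 0 * a + X 1 * b + X 2 * c = 0)
    (hsat : ∀ d : MvPolynomial (Fin 3) ℂ, d ∣ a → d ∣ b → d ∣ c → IsUnit d)
    (p s : ℂ × ℂ) (hps : s ≠ p)
    (hp : 3 ≤ algMult (aeval ![X 0, X 1, (1 : MvPolynomial (Fin 2) ℂ)] a)
      (aeval ![X 0, X 1, (1 : MvPolynomial (Fin 2) ℂ)] b) p) :
    algMult (aeval ![X 0, X 1, (1 : MvPolynomial (Fin 2) ℂ)] a)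
      (aeval ![X 0, X 1, (1 : MvPolynomial (Fin 2) ℂ)] b) s ≤ 1 := by
  by_contra! hs
  rw [algMult, le_min_iff] at hp
  rw [algMult, lt_min_iff] at hs
  set φ := restrictToSpan ![(s - p).1, (s - p).2, 0] ![p.1, p.2, 1]
  have hφa : φ a = 0 := restrictToSpan_eq_zero_of_le_mvOrder ha (by norm_num) hp.1 hs.1
  have hφb : φ b = 0 := restrictToSpan_eq_zero_of_le_mvOrder hb (by norm_num) hp.2 hs.2
  have hφc : φ c = 0 := by
    have := congrArg φ heuler
    simp only [map_add, map_mul, map_zero, hφa, hφb, mul_zero, zero_add] at this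
    simpa [φ, restrictToSpan_X, X_ne_zero] using this
  obtain ⟨w, hw⟩ := exists_mul_sub_mul_eq_one (sub_ne_zero.mpr hps)
  exact not_isUnit_lineForm p (s - p) <| hsat _
    (lineForm_dvd_of_restrictToSpan_eq_zero hw hφa)
    (lineForm_dvd_of_restrictToSpan_eq_zero hw hφb)
    (lineForm_dvd_of_restrictToSpan_eq_zero hw hφc)

/-- Let `F` be a saturated foliation of degree `3` on `ℙ²`, given by a
homogeneous 1-form `a dx + b dy + c dz` of degree `4` with the Euler relation and no common
factor.  If `p` is a singular point (here taken in the affine chart `{z = 1}`, whose local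
singular ideal is generated by `a(x,y,1)` and `b(x,y,1)`) with algebraic multiplicity
`ν(F,p) ≥ 3`, then every other singular point `s ≠ p` satisfies `ν(F,s) ≤ 2` — in fact
`ν(F,s) ≤ 1`. -/
theorem stmt7 (a b c : MvPolynomial (Fin 3) ℂ)
    (ha : a.IsHomogeneous 4) (hb : b.IsHomogeneous 4) (hc : c.IsHomogeneous 4)
    (heuler : X 0 * a + X 1 * b + X 2 * c = 0)
    (hsat : ∀ d : MvPolynomial (Fin 3) ℂ, d ∣ a → d ∣ b → d ∣ c → IsUnit d)
    (p s : ℂ × ℂ) (hps : s ≠ p)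
    (hp : 3 ≤ algMult (aeval ![X 0, X 1, (1 : MvPolynomial (Fin 2) ℂ)] a)
      (aeval ![X 0, X 1, (1 : MvPolynomial (Fin 2) ℂ)] b) p) :
    algMult (aeval ![X 0, X 1, (1 : MvPolynomial (Fin 2) ℂ)] a)
      (aeval ![X 0, X 1, (1 : MvPolynomial (Fin 2) ℂ)] b) s ≤ 1 :=
  stmt7_general a b c ha hb heuler hsat p s hps hp
end

section
/- With the notation of the previous lemma (ω_i = dy + y^a h_i dx, y ∤ h_{ij} for i≠j), the curvature dη = (∂_x V − ∂_y U) dx∧dy of the 3-web ω₁ω₂ω₃ = 0 is holomorphic along {y=0} if and only if y^a divides ∂_x[(h₁₂ ∂_x h₂₃ − h₂₃ ∂_x h₁₂)/(h₁₂ h₂₃ h₃₁)]. -/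
/-!
Two of the three structure equations are linear in `U` and `V` off `{y = 0}`; eliminating `U`
gives `V = V₀ - Φ / y^a - 2a / y` and `U = U₀` with `Φ`, `V₀`, `U₀` holomorphic near `(x₀, 0)`,
because the `hᵢⱼ` do not vanish there. As `∂ₓ` kills functions of `y` alone, the curvature is
`∂ₓV₀ - ∂_yU₀ - ∂ₓΦ / y^a` off the axis, so it extends holomorphically across `{y = 0}` exactly
when `∂ₓΦ / y^a` does, i.e. when `y^a ∣ ∂ₓΦ`; the forward direction extends the identity
`∂ₓΦ = y^a g` from the dense set `{y ≠ 0}` by continuity.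
-/

/-- Partial derivative with respect to the first variable. -/
noncomputable def pd1 (f : ℂ × ℂ → ℂ) (z : ℂ × ℂ) : ℂ := fderiv ℂ f z (1, 0)

/-- Partial derivative with respect to the second variable. -/
noncomputable def pd2 (f : ℂ × ℂ → ℂ) (z : ℂ × ℂ) : ℂ := fderiv ℂ f z (0, 1)

open Topology Filter

section PartialDerivatives

variable {f g : ℂ × ℂ → ℂ} {z : ℂ × ℂ}

theorem AnalyticAt.pd1 (hf : AnalyticAt ℂ f z) : AnalyticAt ℂ (pd1 f) z :=
  ((ContinuousLinearMap.apply ℂ ℂ ((1 : ℂ), (0 : ℂ))).analyticAt _).comp hf.fderiv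

theorem AnalyticAt.pd2 (hf : AnalyticAt ℂ f z) : AnalyticAt ℂ (pd2 f) z :=
  ((ContinuousLinearMap.apply ℂ ℂ ((0 : ℂ), (1 : ℂ))).analyticAt _).comp hf.fderiv

theorem Filter.EventuallyEq.pd1_eq (h : f =ᶠ[𝓝 z] g) : pd1 f z = pd1 g z := by
  rw [pd1, h.fderiv_eq, pd1]

theorem Filter.EventuallyEq.pd2_eq (h : f =ᶠ[𝓝 z] g) : pd2 f z = pd2 g z := by
  rw [pd2, h.fderiv_eq, pd2]

theorem pd1_sub (hf : DifferentiableAt ℂ f z) (hg : DifferentiableAt ℂ g z) :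
    pd1 (fun w => f w - g w) z = pd1 f z - pd1 g z := by
  simp [pd1, fderiv_fun_sub hf hg]

theorem pd1_comp_snd {φ : ℂ → ℂ} (hφ : DifferentiableAt ℂ φ z.2) :
    pd1 (fun w => φ w.2) z = 0 := by
  simp [pd1, fderiv_fun_comp z hφ differentiableAt_snd, fderiv_snd]

theorem pd1_mul_comp_snd {φ : ℂ → ℂ} (hf : DifferentiableAt ℂ f z)
    (hφ : DifferentiableAt ℂ φ z.2) :
    pd1 (fun w => f w * φ w.2) z = pd1 f z * φ z.2 := by
  have hψ : DifferentiableAt ℂ (fun w : ℂ × ℂ => φ w.2) z := hφ.comp z differentiableAt_snd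
  have h0 := pd1_comp_snd hφ
  simp only [pd1] at h0 ⊢
  simp [fderiv_fun_mul hf hψ, h0, smul_eq_mul, mul_comm]

theorem pd1_div_comp_snd {φ : ℂ → ℂ} (hf : DifferentiableAt ℂ f z)
    (hφ : DifferentiableAt ℂ φ z.2) (hφz : φ z.2 ≠ 0) :
    pd1 (fun w => f w / φ w.2) z = pd1 f z / φ z.2 := by
  simpa only [div_eq_mul_inv] using pd1_mul_comp_snd (φ := fun t => (φ t)⁻¹) hf (hφ.inv hφz)

theorem pd1_snd_pow_mul (hg : DifferentiableAt ℂ g z) (m : ℕ) :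
    pd1 (fun w => w.2 ^ m * g w) z = z.2 ^ m * pd1 g z := by
  simpa only [mul_comm] using pd1_mul_comp_snd hg (differentiableAt_pow (x := z.2) m)

theorem pd2_snd_pow_mul (hg : DifferentiableAt ℂ g z) (hz : z.2 ≠ 0) (m : ℕ) :
    pd2 (fun w => w.2 ^ m * g w) z = z.2 ^ m * (m / z.2 * g z + pd2 g z) := by
  have hpow : HasFDerivAt (fun w : ℂ × ℂ => w.2 ^ m)
      (((m : ℂ) * z.2 ^ (m - 1)) • ContinuousLinearMap.snd ℂ ℂ ℂ) z :=
    (hasDerivAt_pow m z.2).comp_hasFDerivAt z hasFDerivAt_snd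
  rw [pd2, (hpow.fun_mul hg.hasFDerivAt).fderiv]
  rcases m with _ | m
  · simp [pd2]
  · simp [pd2, pow_succ]
    field_simp
    ring

theorem pd1_sub_pd2_eq_of_eventuallyEq {a : ℕ} {B U V : ℂ × ℂ → ℂ} (hz : z.2 ≠ 0)
    (hf : DifferentiableAt ℂ f z) (hg : DifferentiableAt ℂ g z)
    (hV : V =ᶠ[𝓝 z] fun w => g w - f w / w.2 ^ a - 2 * a / w.2) (hU : U =ᶠ[𝓝 z] B) :
    pd1 V z - pd2 U z = pd1 g z - pd2 B z - pd1 f z / z.2 ^ a := by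
  have hT : z.2 ^ a ≠ 0 := pow_ne_zero a hz
  have hgf : DifferentiableAt ℂ (fun w : ℂ × ℂ => g w - f w / w.2 ^ a) z := by
    fun_prop (disch := exact hT)
  have hc : DifferentiableAt ℂ (fun t : ℂ => 2 * a / t) z.2 := by
    fun_prop (disch := exact hz)
  rw [hV.pd1_eq, hU.pd2_eq,
    pd1_sub hgf (g := fun w => 2 * a / w.2) (hc.comp z differentiableAt_snd), pd1_comp_snd hc, pd1_sub hg (by fun_prop (disch := exact hT)),
    pd1_div_comp_snd hf (differentiableAt_pow a) hT]
  ring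

end PartialDerivatives

theorem Dense.eventuallyEq_of_eventually_mem_imp {X Y : Type*} [TopologicalSpace X]
    [TopologicalSpace Y] [T2Space Y] {s : Set X} (hs : Dense s) {f g : X → Y} {p : X}
    (hf : ∀ᶠ z in 𝓝 p, ContinuousAt f z) (hg : ∀ᶠ z in 𝓝 p, ContinuousAt g z)
    (h : ∀ᶠ z in 𝓝 p, z ∈ s → f z = g z) : f =ᶠ[𝓝 p] g := by
  filter_upwards [h.eventually_nhds, hf, hg] with z hz hfz hgz
  have := mem_closure_iff_nhdsWithin_neBot.mp (hs z)
  exact tendsto_nhds_unique_of_eventuallyEq (hfz.tendsto.mono_left nhdsWithin_le_nhds)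
    (hgz.tendsto.mono_left nhdsWithin_le_nhds) (eventually_nhdsWithin_iff.mpr hz)

theorem dense_setOf_snd_ne_zero (E : Type*) [TopologicalSpace E] :
    Dense {z : E × ℂ | z.2 ≠ 0} :=
  (dense_compl_singleton (0 : ℂ)).preimage isOpenMap_snd

theorem exists_analyticAt_eq_off_axis_iff {E : Type*} [NormedAddCommGroup E]
    [NormedSpace ℂ E] {κ f C : E × ℂ → ℂ} {p : E × ℂ} (a : ℕ) (hf : AnalyticAt ℂ f p)
    (hC : AnalyticAt ℂ C p) (hκ : ∀ᶠ z in 𝓝 p, z.2 ≠ 0 → κ z = C z - f z / z.2 ^ a) :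
    (∃ K : E × ℂ → ℂ, AnalyticAt ℂ K p ∧ ∀ᶠ z in 𝓝 p, z.2 ≠ 0 → K z = κ z) ↔
      ∃ g : E × ℂ → ℂ, AnalyticAt ℂ g p ∧ ∀ᶠ z in 𝓝 p, f z = z.2 ^ a * g z := by
  constructor
  · rintro ⟨K, hK, hKκ⟩
    refine ⟨C - K, hC.sub hK, (dense_setOf_snd_ne_zero E).eventuallyEq_of_eventually_mem_imp
      (hf.eventually_analyticAt.mono fun z hz => hz.continuousAt)
      ((hC.sub hK).eventually_analyticAt.mono fun z hz =>
        ((continuous_snd.pow a).continuousAt).mul hz.continuousAt) ?_⟩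
    filter_upwards [hKκ, hκ] with z hKz hκz hz
    rw [Pi.sub_apply, hKz hz, hκz hz]
    field_simp [pow_ne_zero a (show z.2 ≠ 0 from hz)]
    ring
  · rintro ⟨g, hg, hfg⟩
    refine ⟨C - g, hC.sub hg, ?_⟩
    filter_upwards [hκ, hfg] with z hκz hfgz hz
    rw [Pi.sub_apply, hκz hz, hfgz]
    field_simp [pow_ne_zero a hz]

namespace ThreeWeb

/-- The structure equation `d(δω) = δω ∧ η` for `δ = y^a D`, `ω = dy + y^a A dx` and
`η = U dx + V dy`, as the coefficient of `dx ∧ dy`. -/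
def StructureEq (a : ℕ) (D A U V : ℂ × ℂ → ℂ) (z : ℂ × ℂ) : Prop :=
  pd1 (fun w => w.2 ^ a * D w) z - pd2 (fun w => w.2 ^ a * D w * (w.2 ^ a * A w)) z
    = z.2 ^ a * D z * (z.2 ^ a * A z * V z - U z)

theorem StructureEq.U_eq {a : ℕ} {D A U V : ℂ × ℂ → ℂ} {z : ℂ × ℂ}
    (h : StructureEq a D A U V z) (hD : DifferentiableAt ℂ D z) (hA : DifferentiableAt ℂ A z)
    (hz : z.2 ≠ 0) (hDz : D z ≠ 0) :
    U z = z.2 ^ a * (A z * (V z + 2 * a / z.2) + pd2 (fun w => D w * A w) z / D z)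
      - pd1 D z / D z := by
  have hpow : (fun w : ℂ × ℂ => w.2 ^ a * D w * (w.2 ^ a * A w))
      = fun w => w.2 ^ (2 * a) * (D w * A w) := by
    funext w
    ring
  rw [StructureEq, hpow, pd1_snd_pow_mul hD, pd2_snd_pow_mul (hD.fun_mul hA) hz] at h
  push_cast at h
  field_simp at h ⊢
  apply mul_left_cancel₀ (pow_ne_zero a hz)
  linear_combination h

theorem W_eq_of_U_eq_of_U_eq {K : Type*} [Field K] {T A₁ A₂ A₃ P₁₂ P₂₃ Q₁₂ Q₂₃ U W : K}
    (hT : T ≠ 0) (h₁₂ : A₁ - A₂ ≠ 0) (h₂₃ : A₂ - A₃ ≠ 0) (h₃₁ : A₃ - A₁ ≠ 0)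
    (e₁ : U = T * (A₃ * W + Q₁₂ / (A₁ - A₂)) - P₁₂ / (A₁ - A₂))
    (e₂ : U = T * (A₁ * W + Q₂₃ / (A₂ - A₃)) - P₂₃ / (A₂ - A₃)) :
    W = (Q₂₃ / (A₂ - A₃) - Q₁₂ / (A₁ - A₂)) / (A₃ - A₁)
      - ((A₁ - A₂) * P₂₃ - (A₂ - A₃) * P₁₂) / ((A₁ - A₂) * (A₂ - A₃) * (A₃ - A₁)) / T := by
  have h : T * (A₃ - A₁) * W = T * (Q₂₃ / (A₂ - A₃) - Q₁₂ / (A₁ - A₂))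
      + (P₁₂ / (A₁ - A₂) - P₂₃ / (A₂ - A₃)) := by
    linear_combination e₂ - e₁
  field_simp
  field_simp at h
  linear_combination h

variable {h₁ h₂ h₃ : ℂ × ℂ → ℂ}

noncomputable def Φ (h₁ h₂ h₃ : ℂ × ℂ → ℂ) (w : ℂ × ℂ) : ℂ :=
  ((h₁ w - h₂ w) * pd1 (fun u => h₂ u - h₃ u) w - (h₂ w - h₃ w) * pd1 (fun u => h₁ u - h₂ u) w)
    / ((h₁ w - h₂ w) * (h₂ w - h₃ w) * (h₃ w - h₁ w))

/-- Off `{y = 0}`, `V = V₀ - Φ / y^a - 2a / y` and `U = U₀` (`IsRegularAt.V_eq_and_U_eq`). -/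
noncomputable def V₀ (h₁ h₂ h₃ : ℂ × ℂ → ℂ) (w : ℂ × ℂ) : ℂ :=
  (pd2 (fun u => (h₂ u - h₃ u) * h₁ u) w / (h₂ w - h₃ w)
    - pd2 (fun u => (h₁ u - h₂ u) * h₃ u) w / (h₁ w - h₂ w)) / (h₃ w - h₁ w)

noncomputable def U₀ (a : ℕ) (h₁ h₂ h₃ : ℂ × ℂ → ℂ) (w : ℂ × ℂ) : ℂ :=
  w.2 ^ a * (h₃ w * V₀ h₁ h₂ h₃ w + pd2 (fun u => (h₁ u - h₂ u) * h₃ u) w / (h₁ w - h₂ w))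
    - h₃ w * Φ h₁ h₂ h₃ w - pd1 (fun u => h₁ u - h₂ u) w / (h₁ w - h₂ w)

structure IsRegularAt (h₁ h₂ h₃ : ℂ × ℂ → ℂ) (z : ℂ × ℂ) : Prop where
  analyticAt₁ : AnalyticAt ℂ h₁ z
  analyticAt₂ : AnalyticAt ℂ h₂ z
  analyticAt₃ : AnalyticAt ℂ h₃ z
  sub_ne_zero₁₂ : h₁ z - h₂ z ≠ 0
  sub_ne_zero₂₃ : h₂ z - h₃ z ≠ 0
  sub_ne_zero₃₁ : h₃ z - h₁ z ≠ 0

theorem eventually_isRegularAt {p : ℂ × ℂ} (H₁ : AnalyticAt ℂ h₁ p) (H₂ : AnalyticAt ℂ h₂ p)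
    (H₃ : AnalyticAt ℂ h₃ p) (h₁₂ : h₁ p ≠ h₂ p) (h₂₃ : h₂ p ≠ h₃ p) (h₃₁ : h₃ p ≠ h₁ p) :
    ∀ᶠ z in 𝓝 p, IsRegularAt h₁ h₂ h₃ z := by
  filter_upwards [H₁.eventually_analyticAt, H₂.eventually_analyticAt, H₃.eventually_analyticAt,
    (H₁.sub H₂).continuousAt.eventually_ne (sub_ne_zero.2 h₁₂),
    (H₂.sub H₃).continuousAt.eventually_ne (sub_ne_zero.2 h₂₃),
    (H₃.sub H₁).continuousAt.eventually_ne (sub_ne_zero.2 h₃₁)] with z a₁ a₂ a₃ n₁₂ n₂₃ n₃₁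
  exact ⟨a₁, a₂, a₃, n₁₂, n₂₃, n₃₁⟩

namespace IsRegularAt

variable {z : ℂ × ℂ}

theorem analyticAt_Φ (hr : IsRegularAt h₁ h₂ h₃ z) : AnalyticAt ℂ (Φ h₁ h₂ h₃) z :=
  have a₁₂ := hr.analyticAt₁.sub hr.analyticAt₂
  have a₂₃ := hr.analyticAt₂.sub hr.analyticAt₃
  ((a₁₂.mul a₂₃.pd1).sub (a₂₃.mul a₁₂.pd1)).div
    ((a₁₂.mul a₂₃).mul (hr.analyticAt₃.sub hr.analyticAt₁))
    (mul_ne_zero (mul_ne_zero hr.sub_ne_zero₁₂ hr.sub_ne_zero₂₃) hr.sub_ne_zero₃₁)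

theorem analyticAt_V₀ (hr : IsRegularAt h₁ h₂ h₃ z) : AnalyticAt ℂ (V₀ h₁ h₂ h₃) z :=
  have a₁₂ := hr.analyticAt₁.sub hr.analyticAt₂
  have a₂₃ := hr.analyticAt₂.sub hr.analyticAt₃
  ((((a₂₃.mul hr.analyticAt₁).pd2).div a₂₃ hr.sub_ne_zero₂₃).sub
    (((a₁₂.mul hr.analyticAt₃).pd2).div a₁₂ hr.sub_ne_zero₁₂)).div
    (hr.analyticAt₃.sub hr.analyticAt₁) hr.sub_ne_zero₃₁

theorem analyticAt_U₀ (a : ℕ) (hr : IsRegularAt h₁ h₂ h₃ z) : AnalyticAt ℂ (U₀ a h₁ h₂ h₃) z :=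
  have a₁₂ := hr.analyticAt₁.sub hr.analyticAt₂
  (((analyticAt_snd.pow a).mul ((hr.analyticAt₃.mul hr.analyticAt_V₀).add
    (((a₁₂.mul hr.analyticAt₃).pd2).div a₁₂ hr.sub_ne_zero₁₂))).sub
    (hr.analyticAt₃.mul hr.analyticAt_Φ)).sub (a₁₂.pd1.div a₁₂ hr.sub_ne_zero₁₂)

theorem V_eq_and_U_eq {a : ℕ} {U V : ℂ × ℂ → ℂ} (hr : IsRegularAt h₁ h₂ h₃ z) (hz : z.2 ≠ 0)
    (e₁ : StructureEq a (fun w => h₁ w - h₂ w) h₃ U V z)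
    (e₂ : StructureEq a (fun w => h₂ w - h₃ w) h₁ U V z) :
    V z = V₀ h₁ h₂ h₃ z - Φ h₁ h₂ h₃ z / z.2 ^ a - 2 * a / z.2 ∧ U z = U₀ a h₁ h₂ h₃ z := by
  have d₁ := hr.analyticAt₁.differentiableAt
  have d₂ := hr.analyticAt₂.differentiableAt
  have d₃ := hr.analyticAt₃.differentiableAt
  have hU₁ := e₁.U_eq (d₁.sub d₂) d₃ hz hr.sub_ne_zero₁₂
  have hU₂ := e₂.U_eq (d₂.sub d₃) d₁ hz hr.sub_ne_zero₂₃
  have hT := pow_ne_zero a hz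
  have hV : V z + 2 * a / z.2 = V₀ h₁ h₂ h₃ z - Φ h₁ h₂ h₃ z / z.2 ^ a :=
    W_eq_of_U_eq_of_U_eq hT hr.sub_ne_zero₁₂ hr.sub_ne_zero₂₃ hr.sub_ne_zero₃₁ hU₁ hU₂
  refine ⟨by linear_combination hV, ?_⟩
  rw [hU₁, hV, U₀]
  field_simp
  ring

end IsRegularAt

end ThreeWeb

theorem stmt10_general (a : ℕ) (h₁ h₂ h₃ U V : ℂ × ℂ → ℂ) (x₀ : ℂ)
    (H1 : AnalyticAt ℂ h₁ (x₀, 0)) (H2 : AnalyticAt ℂ h₂ (x₀, 0))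
    (H3 : AnalyticAt ℂ h₃ (x₀, 0))
    (h12 : h₁ (x₀, 0) ≠ h₂ (x₀, 0)) (h23 : h₂ (x₀, 0) ≠ h₃ (x₀, 0))
    (h31 : h₃ (x₀, 0) ≠ h₁ (x₀, 0))
    (heq : ∀ i : Fin 3, ∀ᶠ z : ℂ × ℂ in nhds (x₀, 0), z.2 ≠ 0 →
      (pd1 (fun w => w.2 ^ a * (![h₁, h₂, h₃] i w - ![h₂, h₃, h₁] i w)) z
        - pd2 (fun w => w.2 ^ a * (![h₁, h₂, h₃] i w - ![h₂, h₃, h₁] i w)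
            * (w.2 ^ a * ![h₃, h₁, h₂] i w)) z)
      = z.2 ^ a * (![h₁, h₂, h₃] i z - ![h₂, h₃, h₁] i z)
          * (z.2 ^ a * ![h₃, h₁, h₂] i z * V z - U z)) :
    (∃ K : ℂ × ℂ → ℂ, AnalyticAt ℂ K (x₀, 0) ∧
        ∀ᶠ z : ℂ × ℂ in nhds (x₀, 0), z.2 ≠ 0 → K z = pd1 V z - pd2 U z)
    ↔ (∃ g : ℂ × ℂ → ℂ, AnalyticAt ℂ g (x₀, 0) ∧
        ∀ᶠ z : ℂ × ℂ in nhds (x₀, 0),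
          pd1 (fun w => ((h₁ w - h₂ w) * pd1 (fun u => h₂ u - h₃ u) w
              - (h₂ w - h₃ w) * pd1 (fun u => h₁ u - h₂ u) w)
            / ((h₁ w - h₂ w) * (h₂ w - h₃ w) * (h₃ w - h₁ w))) z
          = z.2 ^ a * g z) := by
  open ThreeWeb in
  have hreg := eventually_isRegularAt H1 H2 H3 h12 h23 h31
  have hVU : ∀ᶠ z in 𝓝 (x₀, 0), z.2 ≠ 0 →
      V z = V₀ h₁ h₂ h₃ z - Φ h₁ h₂ h₃ z / z.2 ^ a - 2 * a / z.2 ∧ U z = U₀ a h₁ h₂ h₃ z := by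
    filter_upwards [hreg, heq 0, heq 1] with z hz e₁ e₂ hy
    exact hz.V_eq_and_U_eq hy (e₁ hy) (e₂ hy)
  have hcurv : ∀ᶠ z in 𝓝 (x₀, 0), z.2 ≠ 0 → pd1 V z - pd2 U z
      = (pd1 (V₀ h₁ h₂ h₃) z - pd2 (U₀ a h₁ h₂ h₃) z) - pd1 (Φ h₁ h₂ h₃) z / z.2 ^ a := by
    filter_upwards [hVU.eventually_nhds, hreg] with z hVUz hz hy
    have hVU' := hVUz.mp ((continuous_snd.continuousAt.eventually_ne hy).mono fun w hw h => h hw)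
    exact pd1_sub_pd2_eq_of_eventuallyEq hy hz.analyticAt_Φ.differentiableAt
      hz.analyticAt_V₀.differentiableAt (hVU'.mono fun w hw => hw.1) (hVU'.mono fun w hw => hw.2)
  have hreg₀ := hreg.self_of_nhds
  exact exists_analyticAt_eq_off_axis_iff a hreg₀.analyticAt_Φ.pd1
    (hreg₀.analyticAt_V₀.pd1.sub (hreg₀.analyticAt_U₀ a).pd2) hcurv

/-- With the notation of the previous lemma (`ωᵢ = dy + y^a hᵢ dx`,
`y ∤ hᵢⱼ = hᵢ - hⱼ` for `i ≠ j`, near a generic point `(x₀,0)` of `{y = 0}`, and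
`η = U dx + V dy` the unique 1-form with `d(δᵢⱼωₖ) = δᵢⱼωₖ ∧ η` for cyclic `(i,j,k)`), the
curvature `dη = (∂ₓV - ∂_yU) dx ∧ dy` of the 3-web `ω₁ω₂ω₃ = 0` is holomorphic along `{y = 0}`
if and only if `y^a` divides `∂ₓ[(h₁₂ ∂ₓh₂₃ - h₂₃ ∂ₓh₁₂)/(h₁₂ h₂₃ h₃₁)]`. -/
theorem stmt10 (a : ℕ) (h₁ h₂ h₃ U V : ℂ × ℂ → ℂ) (x₀ : ℂ)
    (H1 : AnalyticAt ℂ h₁ (x₀, 0)) (H2 : AnalyticAt ℂ h₂ (x₀, 0))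
    (H3 : AnalyticAt ℂ h₃ (x₀, 0))
    (h12 : h₁ (x₀, 0) ≠ h₂ (x₀, 0)) (h23 : h₂ (x₀, 0) ≠ h₃ (x₀, 0))
    (h31 : h₃ (x₀, 0) ≠ h₁ (x₀, 0))
    (hUV : ∀ᶠ z : ℂ × ℂ in nhds (x₀, 0), z.2 ≠ 0 → AnalyticAt ℂ U z ∧ AnalyticAt ℂ V z)
    (heq : ∀ i : Fin 3, ∀ᶠ z : ℂ × ℂ in nhds (x₀, 0), z.2 ≠ 0 →
      (pd1 (fun w => w.2 ^ a * (![h₁, h₂, h₃] i w - ![h₂, h₃, h₁] i w)) z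
        - pd2 (fun w => w.2 ^ a * (![h₁, h₂, h₃] i w - ![h₂, h₃, h₁] i w)
            * (w.2 ^ a * ![h₃, h₁, h₂] i w)) z)
      = z.2 ^ a * (![h₁, h₂, h₃] i z - ![h₂, h₃, h₁] i z)
          * (z.2 ^ a * ![h₃, h₁, h₂] i z * V z - U z)) :
    (∃ K : ℂ × ℂ → ℂ, AnalyticAt ℂ K (x₀, 0) ∧
        ∀ᶠ z : ℂ × ℂ in nhds (x₀, 0), z.2 ≠ 0 → K z = pd1 V z - pd2 U z)
    ↔ (∃ g : ℂ × ℂ → ℂ, AnalyticAt ℂ g (x₀, 0) ∧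
        ∀ᶠ z : ℂ × ℂ in nhds (x₀, 0),
          pd1 (fun w => ((h₁ w - h₂ w) * pd1 (fun u => h₂ u - h₃ u) w
              - (h₂ w - h₃ w) * pd1 (fun u => h₁ u - h₂ u) w)
            / ((h₁ w - h₂ w) * (h₂ w - h₃ w) * (h₃ w - h₁ w))) z
          = z.2 ^ a * g z) :=
  stmt10_general a h₁ h₂ h₃ U V x₀ H1 H2 H3 h12 h23 h31 heq
end
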